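/- In the setting of Problem 1, if for every k ∈ K the parallel sum (B_k^m+B_k^c+B_k^l) □ (D_k^m+D_k^c+D_k^l) is at most single-valued (every value of this set-valued operator has at most one element), then nonemptiness of the primal solution set 𝒫 implies nonemptiness of the Kuhn–Tucker set Z. -/

import Mathlib

/-!
Statement 5: In the setting of Problem 1, if for every `k ∈ K` the parallel sum
`(Bₖᵐ+Bₖᶜ+Bₖˡ) □ (Dₖᵐ+Dₖᶜ+Dₖˡ)` is at most single-valued, then nonemptiness of the
primal solution set `𝒫` implies nonemptiness of the Kuhn–Tucker set `Z`.
-/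

open scoped RealInnerProductSpace Pointwise
open Filter Topology

noncomputable section

/-- A set-valued operator is monotone. -/
def IsMonotoneOp {E : Type*} [NormedAddCommGroup E] [InnerProductSpace ℝ E]
    (A : E → Set E) : Prop :=
  ∀ ⦃x x' y y'⦄, x' ∈ A x → y' ∈ A y → (0:ℝ) ≤ ⟪x - y, x' - y'⟫

/-- A set-valued operator is maximally monotone. -/
def IsMaxMonotoneOp {E : Type*} [NormedAddCommGroup E] [InnerProductSpace ℝ E]
    (A : E → Set E) : Prop :=
  IsMonotoneOp A ∧
    ∀ x x', (∀ y y', y' ∈ A y → (0:ℝ) ≤ ⟪x - y, x' - y'⟫) → x' ∈ A x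

/-- A single-valued operator is monotone. -/
def IsMonotoneMap {E : Type*} [NormedAddCommGroup E] [InnerProductSpace ℝ E]
    (f : E → E) : Prop :=
  ∀ x y, (0:ℝ) ≤ ⟪x - y, f x - f y⟫

/-- `f` is Lipschitz continuous with constant `c`. -/
def IsLipschitzMap {E F : Type*} [NormedAddCommGroup E] [NormedAddCommGroup F]
    (f : E → F) (c : ℝ) : Prop :=
  ∀ x y, ‖f x - f y‖ ≤ c * ‖x - y‖

/-- `f` is cocoercive with constant `α`. -/
def IsCocoercive {E : Type*} [NormedAddCommGroup E] [InnerProductSpace ℝ E]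
    (f : E → E) (α : ℝ) : Prop :=
  ∀ x y, α * ‖f x - f y‖ ^ 2 ≤ ⟪x - y, f x - f y⟫

/-- Inverse of a set-valued operator. -/
def opInv {E : Type*} (A : E → Set E) : E → Set E := fun u => {x | u ∈ A x}

/-- Parallel sum `B □ D = (B⁻¹ + D⁻¹)⁻¹` of two set-valued operators. -/
def parSum {E : Type*} [AddCommGroup E] (B D : E → Set E) : E → Set E :=
  opInv fun u => opInv B u + opInv D u

/-- Sum `A + f` of a set-valued operator and a single-valued one. -/
def svAdd {E : Type*} [AddCommGroup E] (Am : E → Set E) (f : E → E) : E → Set E :=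
  fun x => {p | p - f x ∈ Am x}

universe u

variable {I K : Type*}

/-- The family of component spaces of `𝗫 = 𝗛 ⊕ 𝗚 ⊕ 𝗚 ⊕ 𝗚`. -/
def XFam (H : I → Type u) (G : K → Type u) : I ⊕ K ⊕ K ⊕ K → Type u :=
  Sum.elim H (Sum.elim G (Sum.elim G G))

variable {H : I → Type u} {G : K → Type u}

instance [∀ i, NormedAddCommGroup (H i)] [∀ k, NormedAddCommGroup (G k)] :
    ∀ st, NormedAddCommGroup (XFam H G st)
  | Sum.inl i => inferInstanceAs (NormedAddCommGroup (H i))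
  | Sum.inr (Sum.inl k) => inferInstanceAs (NormedAddCommGroup (G k))
  | Sum.inr (Sum.inr (Sum.inl k)) => inferInstanceAs (NormedAddCommGroup (G k))
  | Sum.inr (Sum.inr (Sum.inr k)) => inferInstanceAs (NormedAddCommGroup (G k))

instance [∀ i, NormedAddCommGroup (H i)] [∀ k, NormedAddCommGroup (G k)]
    [∀ i, InnerProductSpace ℝ (H i)] [∀ k, InnerProductSpace ℝ (G k)] :
    ∀ st, InnerProductSpace ℝ (XFam H G st)
  | Sum.inl i => inferInstanceAs (InnerProductSpace ℝ (H i))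
  | Sum.inr (Sum.inl k) => inferInstanceAs (InnerProductSpace ℝ (G k))
  | Sum.inr (Sum.inr (Sum.inl k)) => inferInstanceAs (InnerProductSpace ℝ (G k))
  | Sum.inr (Sum.inr (Sum.inr k)) => inferInstanceAs (InnerProductSpace ℝ (G k))

def Xx (w : PiLp 2 (XFam H G)) [∀ i, NormedAddCommGroup (H i)]
    [∀ k, NormedAddCommGroup (G k)] : PiLp 2 H := WithLp.toLp 2 fun i => w (Sum.inl i)

def Xy (w : PiLp 2 (XFam H G)) [∀ i, NormedAddCommGroup (H i)]
    [∀ k, NormedAddCommGroup (G k)] : PiLp 2 G := WithLp.toLp 2 fun k => w (Sum.inr (Sum.inl k))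

def Xz (w : PiLp 2 (XFam H G)) [∀ i, NormedAddCommGroup (H i)]
    [∀ k, NormedAddCommGroup (G k)] : PiLp 2 G := WithLp.toLp 2 fun k => w (Sum.inr (Sum.inr (Sum.inl k)))

def Xv (w : PiLp 2 (XFam H G)) [∀ i, NormedAddCommGroup (H i)]
    [∀ k, NormedAddCommGroup (G k)] : PiLp 2 G := WithLp.toLp 2 fun k => w (Sum.inr (Sum.inr (Sum.inr k)))

/-- The saddle operator `S` of Problem 1, acting on `𝗫 = 𝗛 ⊕ 𝗚 ⊕ 𝗚 ⊕ 𝗚`,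
realized as `PiLp 2 (XFam H G)`.  A point `w' = (a*, b*, c*, d)` belongs to `S w`,
`w = (x, y, z, v*)`, iff
`aᵢ* ∈ -sᵢ* + Aᵢxᵢ + Cᵢxᵢ + Qᵢxᵢ + Rᵢx + Σₖ Lₖᵢ* vₖ*`,
`bₖ* ∈ Bₖᵐyₖ + Bₖᶜyₖ + Bₖˡyₖ - vₖ*`, `cₖ* ∈ Dₖᵐzₖ + Dₖᶜzₖ + Dₖˡzₖ - vₖ*`, and
`dₖ = rₖ + yₖ + zₖ - Σᵢ Lₖᵢxᵢ`. -/
def SaddleOp [Fintype I] [Fintype K]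
    [∀ i, NormedAddCommGroup (H i)] [∀ i, InnerProductSpace ℝ (H i)]
    [∀ i, CompleteSpace (H i)]
    [∀ k, NormedAddCommGroup (G k)] [∀ k, InnerProductSpace ℝ (G k)]
    [∀ k, CompleteSpace (G k)]
    (s : ∀ i, H i) (r : ∀ k, G k)
    (A : ∀ i, H i → Set (H i)) (C Q : ∀ i, H i → H i) (R : ∀ i, PiLp 2 H → H i)
    (Bm : ∀ k, G k → Set (G k)) (Bc Bl : ∀ k, G k → G k)
    (Dm : ∀ k, G k → Set (G k)) (Dc Dl : ∀ k, G k → G k)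
    (L : ∀ k i, H i →L[ℝ] G k) :
    PiLp 2 (XFam H G) → Set (PiLp 2 (XFam H G)) := fun w =>
  {w' |
    (∀ i, Xx w' i + s i - C i (Xx w i) - Q i (Xx w i) - R i (Xx w)
        - ∑ k, ContinuousLinearMap.adjoint (L k i) (Xv w k) ∈ A i (Xx w i)) ∧
    (∀ k, Xy w' k - Bc k (Xy w k) - Bl k (Xy w k) + Xv w k ∈ Bm k (Xy w k)) ∧
    (∀ k, Xz w' k - Dc k (Xz w k) - Dl k (Xz w k) + Xv w k ∈ Dm k (Xz w k)) ∧
    (∀ k, Xv w' k = r k + Xy w k + Xz w k - ∑ i, L k i (Xx w i))}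

/-- The Kuhn–Tucker set `Z` of Problem 1. -/
def KTSet
    [Fintype I] [Fintype K]
    [∀ i, NormedAddCommGroup (H i)] [∀ i, InnerProductSpace ℝ (H i)]
    [∀ i, CompleteSpace (H i)]
    [∀ k, NormedAddCommGroup (G k)] [∀ k, InnerProductSpace ℝ (G k)]
    [∀ k, CompleteSpace (G k)]
    (s : ∀ i, H i) (r : ∀ k, G k)
    (A : ∀ i, H i → Set (H i)) (C Q : ∀ i, H i → H i) (R : ∀ i, PiLp 2 H → H i)
    (Bm : ∀ k, G k → Set (G k)) (Bc Bl : ∀ k, G k → G k)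
    (Dm : ∀ k, G k → Set (G k)) (Dc Dl : ∀ k, G k → G k)
    (L : ∀ k i, H i →L[ℝ] G k) : Set (PiLp 2 H × PiLp 2 G) :=
  {p | (∀ i, s i - (∑ j, ContinuousLinearMap.adjoint (L j i) (p.2 j))
          - C i (p.1 i) - Q i (p.1 i) - R i p.1 ∈ A i (p.1 i)) ∧
       (∀ k, (∑ j, L k j (p.1 j)) - r k ∈
          opInv (svAdd (Bm k) (fun u => Bc k u + Bl k u)) (p.2 k)
          + opInv (svAdd (Dm k) (fun u => Dc k u + Dl k u)) (p.2 k))}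

/-- The set `𝒫` of solutions of the primal problem of Problem 1. -/
def PrimalSol
    [Fintype I] [Fintype K]
    [∀ i, NormedAddCommGroup (H i)] [∀ i, InnerProductSpace ℝ (H i)]
    [∀ i, CompleteSpace (H i)]
    [∀ k, NormedAddCommGroup (G k)] [∀ k, InnerProductSpace ℝ (G k)]
    [∀ k, CompleteSpace (G k)]
    (s : ∀ i, H i) (r : ∀ k, G k)
    (A : ∀ i, H i → Set (H i)) (C Q : ∀ i, H i → H i) (R : ∀ i, PiLp 2 H → H i)
    (Bm : ∀ k, G k → Set (G k)) (Bc Bl : ∀ k, G k → G k)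
    (Dm : ∀ k, G k → Set (G k)) (Dc Dl : ∀ k, G k → G k)
    (L : ∀ k i, H i →L[ℝ] G k) : Set (PiLp 2 H) :=
  {xb | ∀ i, ∃ u : ∀ k, G k,
      (∀ k, u k ∈ parSum (svAdd (Bm k) (fun w => Bc k w + Bl k w))
          (svAdd (Dm k) (fun w => Dc k w + Dl k w)) ((∑ j, L k j (xb j)) - r k)) ∧
      s i - C i (xb i) - Q i (xb i) - R i xb
        - ∑ k, ContinuousLinearMap.adjoint (L k i) (u k) ∈ A i (xb i)}

/-- The set `𝒟` of solutions of the dual problem of Problem 1. -/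
def DualSol
    [Fintype I] [Fintype K]
    [∀ i, NormedAddCommGroup (H i)] [∀ i, InnerProductSpace ℝ (H i)]
    [∀ i, CompleteSpace (H i)]
    [∀ k, NormedAddCommGroup (G k)] [∀ k, InnerProductSpace ℝ (G k)]
    [∀ k, CompleteSpace (G k)]
    (s : ∀ i, H i) (r : ∀ k, G k)
    (A : ∀ i, H i → Set (H i)) (C Q : ∀ i, H i → H i) (R : ∀ i, PiLp 2 H → H i)
    (Bm : ∀ k, G k → Set (G k)) (Bc Bl : ∀ k, G k → G k)
    (Dm : ∀ k, G k → Set (G k)) (Dc Dl : ∀ k, G k → G k)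
    (L : ∀ k i, H i →L[ℝ] G k) : Set (PiLp 2 G) :=
  {v | ∃ x : PiLp 2 H,
      (∀ i, s i - (∑ j, ContinuousLinearMap.adjoint (L j i) (v j))
          - C i (x i) - Q i (x i) - R i x ∈ A i (x i)) ∧
      (∀ k, v k ∈ parSum (svAdd (Bm k) (fun w => Bc k w + Bl k w))
          (svAdd (Dm k) (fun w => Dc k w + Dl k w)) ((∑ j, L k j (x j)) - r k))}

/-- In the setting of Problem 1, if for every `k ∈ K` the parallel sum
`(Bₖᵐ+Bₖᶜ+Bₖˡ) □ (Dₖᵐ+Dₖᶜ+Dₖˡ)` is at most single-valued, then `𝒫 ≠ ∅` implies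
`Z ≠ ∅`. -/
theorem KT_nonempty_of_primal_nonempty_of_parSum_singleValued
    [Fintype I] [Fintype K] [Nonempty I] [Nonempty K]
    [∀ i, NormedAddCommGroup (H i)] [∀ i, InnerProductSpace ℝ (H i)]
    [∀ i, CompleteSpace (H i)]
    [∀ k, NormedAddCommGroup (G k)] [∀ k, InnerProductSpace ℝ (G k)]
    [∀ k, CompleteSpace (G k)]
    (s : ∀ i, H i) (r : ∀ k, G k)
    (A : ∀ i, H i → Set (H i)) (hA : ∀ i, IsMaxMonotoneOp (A i))
    (C : ∀ i, H i → H i) (αc : I → ℝ) (hαc : ∀ i, 0 < αc i)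
    (hC : ∀ i, IsCocoercive (C i) (αc i))
    (Q : ∀ i, H i → H i) (αl : I → ℝ) (hαl : ∀ i, 0 ≤ αl i)
    (hQm : ∀ i, IsMonotoneMap (Q i)) (hQl : ∀ i, IsLipschitzMap (Q i) (αl i))
    (R : ∀ i, PiLp 2 H → H i) (χ : ℝ) (hχ : 0 ≤ χ)
    (hRm : IsMonotoneMap (fun x : PiLp 2 H => (WithLp.toLp 2 (fun i => R i x) : PiLp 2 H)))
    (hRl : IsLipschitzMap (fun x : PiLp 2 H => (WithLp.toLp 2 (fun i => R i x) : PiLp 2 H)) χ)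
    (Bm : ∀ k, G k → Set (G k)) (hBm : ∀ k, IsMaxMonotoneOp (Bm k))
    (Bc : ∀ k, G k → G k) (βc : K → ℝ) (hβc : ∀ k, 0 < βc k)
    (hBc : ∀ k, IsCocoercive (Bc k) (βc k))
    (Bl : ∀ k, G k → G k) (βl : K → ℝ) (hβl : ∀ k, 0 ≤ βl k)
    (hBlm : ∀ k, IsMonotoneMap (Bl k)) (hBll : ∀ k, IsLipschitzMap (Bl k) (βl k))
    (Dm : ∀ k, G k → Set (G k)) (hDm : ∀ k, IsMaxMonotoneOp (Dm k))
    (Dc : ∀ k, G k → G k) (δc : K → ℝ) (hδc : ∀ k, 0 < δc k)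
    (hDc : ∀ k, IsCocoercive (Dc k) (δc k))
    (Dl : ∀ k, G k → G k) (δl : K → ℝ) (hδl : ∀ k, 0 ≤ δl k)
    (hDlm : ∀ k, IsMonotoneMap (Dl k)) (hDll : ∀ k, IsLipschitzMap (Dl k) (δl k))
    (L : ∀ k i, H i →L[ℝ] G k)
    (hsv : ∀ k (w : G k),
      Set.Subsingleton (parSum (svAdd (Bm k) (fun u => Bc k u + Bl k u))
        (svAdd (Dm k) (fun u => Dc k u + Dl k u)) w))
    (hP : (PrimalSol s r A C Q R Bm Bc Bl Dm Dc Dl L).Nonempty) :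
    (KTSet s r A C Q R Bm Bc Bl Dm Dc Dl L).Nonempty := by
  obtain ⟨xb, hxb⟩ := hP
  obtain ⟨u0, hu0, -⟩ := hxb (Classical.arbitrary I)
  refine ⟨(xb, WithLp.toLp 2 fun k => u0 k), ?_, ?_⟩
  · intro i
    obtain ⟨ui, hui, hAi⟩ := hxb i
    have heq : ∀ k, ui k = u0 k := fun k => hsv k _ (hui k) (hu0 k)
    have h2 : s i - (∑ j, ContinuousLinearMap.adjoint (L j i) (u0 j))
        - C i (xb i) - Q i (xb i) - R i xb
        = s i - C i (xb i) - Q i (xb i) - R i xb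
          - ∑ k, ContinuousLinearMap.adjoint (L k i) (ui k) := by
      simp only [heq, WithLp.ofLp_toLp]; abel
    rw [h2]; exact hAi
  · intro k
    exact hu0 k

end
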